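/- arXiv:1508.03379 — 2 statements merged into one kernel-verified Lean document; each statement's English description precedes it below -/
import Mathlib

section
/- For any probability distribution p on ℤ₊ with finite nonzero mean λ satisfying λ > 2p(2), ζ_CM(p) ≤ 1 − p(0) − p(1)a − p(2)a², where a = p(1)/(λ − 2p(2)). -/
/-- Probability generating function `G_p(s) = ∑ p(k) s^k`. -/
noncomputable def pgf (p : ℕ → ℝ) (s : ℝ) : ℝ := ∑' k : ℕ, p k * s ^ k

/-- Mean `m₁(p) = ∑ k p(k)`. -/
noncomputable def meanNat (p : ℕ → ℝ) : ℝ := ∑' k : ℕ, (k : ℝ) * p k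

/-- Downshifted size biasing `p∘(k) = (k+1) p(k+1) / m₁(p)`. -/
noncomputable def downshift (p : ℕ → ℝ) : ℕ → ℝ :=
  fun k => ((k : ℝ) + 1) * p (k + 1) / meanNat p

/-- Extinction probability: the smallest fixed point of `G_p` in `[0,1]`. -/
noncomputable def eta (p : ℕ → ℝ) : ℝ :=
  sInf {s : ℝ | s ∈ Set.Icc (0 : ℝ) 1 ∧ pgf p s = s}

/-- Configuration model branching functional `ζ_CM(p) = 1 - G_p(η(p∘))`. -/
noncomputable def zetaCM (p : ℕ → ℝ) : ℝ := 1 - pgf p (eta (downshift p))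

/-!
Every fixed point `s ∈ [0,1]` of `G_q` dominates the first two terms of its series, so
`q(0) + q(1) s ≤ s`, i.e. `s ≥ q(0) / (1 - q(1))`; hence `η(q) ≥ q(0) / (1 - q(1))`. For `q = p∘`
this bound is `a = p(1) / (λ - 2p(2))`, and truncating `G_p(η(p∘))` after three terms gives
`G_p(η(p∘)) ≥ p(0) + p(1) a + p(2) a²`.
-/

open Finset Set

section Pgf

variable {q : ℕ → ℝ}

theorem summable_mul_pow_of_mem_Icc (hq : ∀ k, 0 ≤ q k) (hsum : Summable q) {s : ℝ}
    (hs : s ∈ Icc (0 : ℝ) 1) : Summable fun k => q k * s ^ k :=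
  hsum.of_nonneg_of_le (fun k => mul_nonneg (hq k) (pow_nonneg hs.1 k))
    fun k => mul_le_of_le_one_right (hq k) (pow_le_one₀ hs.1 hs.2)

theorem sum_range_le_pgf (hq : ∀ k, 0 ≤ q k) (hsum : Summable q) {s : ℝ}
    (hs : s ∈ Icc (0 : ℝ) 1) (n : ℕ) : ∑ k ∈ range n, q k * s ^ k ≤ pgf q s :=
  (summable_mul_pow_of_mem_Icc hq hsum hs).sum_le_tsum _
    fun k _ => mul_nonneg (hq k) (pow_nonneg hs.1 k)

theorem pgf_one_of_hasSum (hsum : HasSum q 1) : pgf q 1 = 1 := by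
  simpa [pgf] using hsum.tsum_eq

end Pgf

section Eta

variable {q : ℕ → ℝ}

theorem one_mem_fixedPoints_pgf (hsum : HasSum q 1) :
    (1 : ℝ) ∈ {s : ℝ | s ∈ Icc (0 : ℝ) 1 ∧ pgf q s = s} :=
  ⟨right_mem_Icc.2 zero_le_one, pgf_one_of_hasSum hsum⟩

theorem le_eta (hsum : HasSum q 1) {c : ℝ} (hc : ∀ s ∈ Icc (0 : ℝ) 1, pgf q s = s → c ≤ s) :
    c ≤ eta q :=
  le_csInf ⟨1, one_mem_fixedPoints_pgf hsum⟩ fun s hs => hc s hs.1 hs.2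

theorem eta_mem_Icc (hsum : HasSum q 1) : eta q ∈ Icc (0 : ℝ) 1 :=
  ⟨le_eta hsum fun _ hs _ => hs.1, csInf_le ⟨0, fun _ hs => hs.1.1⟩ (one_mem_fixedPoints_pgf hsum)⟩

theorem div_one_sub_le_eta (hq : ∀ k, 0 ≤ q k) (hsum : HasSum q 1) (hq1 : q 1 < 1) :
    q 0 / (1 - q 1) ≤ eta q := by
  refine le_eta hsum fun s hs hfix => ?_
  have htrunc := sum_range_le_pgf hq hsum.summable hs 2
  simp only [sum_range_succ, range_zero, sum_empty, pow_zero, pow_one, hfix] at htrunc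
  rw [div_le_iff₀ (sub_pos.2 hq1)]
  linarith

end Eta

section Downshift

variable {p : ℕ → ℝ}

theorem downshift_nonneg (hp : ∀ k, 0 ≤ p k) (hmean : 0 ≤ meanNat p) (k : ℕ) :
    0 ≤ downshift p k :=
  div_nonneg (mul_nonneg (by positivity) (hp (k + 1))) hmean

theorem hasSum_downshift (hmom : Summable fun k : ℕ => (k : ℝ) * p k) (hmean : meanNat p ≠ 0) :
    HasSum (downshift p) 1 := by
  have hshift : HasSum (fun k : ℕ => ((k : ℝ) + 1) * p (k + 1)) (meanNat p) := by
    have h := (hasSum_nat_add_iff' 1).2 hmom.hasSum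
    simpa [meanNat] using h
  have h := hshift.div_const (meanNat p)
  rw [div_self hmean] at h
  exact h

theorem downshift_one_lt_one (hmean : 0 < meanNat p) (h : 2 * p 2 < meanNat p) :
    downshift p 1 < 1 := by
  rw [downshift, div_lt_one hmean]
  push_cast
  linarith

theorem downshift_zero_div_one_sub_downshift_one (hmean : meanNat p ≠ 0) :
    downshift p 0 / (1 - downshift p 1) = p 1 / (meanNat p - 2 * p 2) := by
  simp only [downshift]
  field_simp
  ring

end Downshift

theorem zetaCM_crude_upper3_general (p : ℕ → ℝ) (hnn : ∀ k, 0 ≤ p k) (hsum : HasSum p 1)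
    (hmom : Summable (fun k : ℕ => (k : ℝ) * p k))
    (hgt : 2 * p 2 < meanNat p) :
    zetaCM p ≤ 1 - p 0 - p 1 * (p 1 / (meanNat p - 2 * p 2))
      - p 2 * (p 1 / (meanNat p - 2 * p 2)) ^ 2 := by
  have hmean : 0 < meanNat p := (mul_nonneg zero_le_two (hnn 2)).trans_lt hgt
  have hq := hasSum_downshift hmom hmean.ne'
  have hq1 := downshift_one_lt_one hmean hgt
  have ha := downshift_zero_div_one_sub_downshift_one (p := p) hmean.ne'
  set a := p 1 / (meanNat p - 2 * p 2)
  set e := eta (downshift p)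
  have hae : a ≤ e := ha ▸ div_one_sub_le_eta (downshift_nonneg hnn hmean.le) hq hq1
  have ha0 : 0 ≤ a := div_nonneg (hnn 1) (by linarith)
  have htrunc := sum_range_le_pgf hnn hsum.summable (eta_mem_Icc hq) 3
  simp only [sum_range_succ, range_zero, sum_empty, pow_zero, pow_one, mul_one, zero_add]
    at htrunc
  calc zetaCM p = 1 - pgf p e := rfl
    _ ≤ 1 - p 0 - p 1 * e - p 2 * e ^ 2 := by linarith
    _ ≤ 1 - p 0 - p 1 * a - p 2 * a ^ 2 := by gcongr <;> exact hnn _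

/-- For any probability distribution `p` on ℤ₊ with finite nonzero mean `λ > 2p(2)`,
`ζ_CM(p) ≤ 1 - p(0) - p(1)a - p(2)a²` where `a = p(1)/(λ - 2p(2))`. -/
theorem zetaCM_crude_upper3 (p : ℕ → ℝ) (hnn : ∀ k, 0 ≤ p k) (hsum : HasSum p 1)
    (hmom : Summable (fun k : ℕ => (k : ℝ) * p k)) (hmean : meanNat p ≠ 0)
    (hgt : 2 * p 2 < meanNat p) :
    zetaCM p ≤ 1 - p 0 - p 1 * (p 1 / (meanNat p - 2 * p 2))
      - p 2 * (p 1 / (meanNat p - 2 * p 2)) ^ 2 :=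
  zetaCM_crude_upper3_general p hnn hsum hmom hgt
end

section
/- Assume p ≤_icv q are probability distributions on ℤ₊ with finite nonzero means, p(i) = q(i) for i = 0,…,ℓ, and η(q∘) ≤ e^{−2/(ℓ+1)}. Then ζ_CM(p) ≤ ζ_CM(q). -/
/-- The increasing concave order `p ≤_icv q`: all sums of increasing concave
functions (such that the sums exist) are ordered. -/
def icvLE (p q : ℕ → ℝ) : Prop :=
  ∀ φ : ℝ → ℝ, Monotone φ → ConcaveOn ℝ Set.univ φ →
    Summable (fun k : ℕ => φ k * p k) → Summable (fun k : ℕ => φ k * q k) →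
    ∑' k : ℕ, φ k * p k ≤ ∑' k : ℕ, φ k * q k

section Aux

open Set

variable {a : ℕ → ℝ}

lemma prob_le_one (ha0 : ∀ k, 0 ≤ a k) (ha1 : HasSum a 1) (k : ℕ) : a k ≤ 1 :=
  le_hasSum ha1 k (fun j _ => ha0 j)

lemma summable_pgf (ha0 : ∀ k, 0 ≤ a k) (ha1 : HasSum a 1) {s : ℝ}
    (hs0 : 0 ≤ s) (hs1 : s ≤ 1) : Summable (fun k : ℕ => a k * s ^ k) := by
  refine Summable.of_nonneg_of_le (fun k => mul_nonneg (ha0 k) (pow_nonneg hs0 k))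
    (fun k => ?_) ha1.summable
  calc a k * s ^ k ≤ a k * 1 := by
        exact mul_le_mul_of_nonneg_left (pow_le_one₀ hs0 hs1) (ha0 k)
    _ = a k := mul_one _

lemma pgf_nonneg (ha0 : ∀ k, 0 ≤ a k) {s : ℝ} (hs0 : 0 ≤ s) : 0 ≤ pgf a s :=
  tsum_nonneg (fun k => mul_nonneg (ha0 k) (pow_nonneg hs0 k))

lemma pgf_one (ha1 : HasSum a 1) : pgf a 1 = 1 := by
  unfold pgf
  simp only [one_pow, mul_one]
  exact ha1.tsum_eq

lemma pgf_zero : pgf a 0 = a 0 := by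
  unfold pgf
  rw [tsum_eq_single 0]
  · simp
  · intro k hk
    rw [zero_pow hk, mul_zero]

lemma pgf_mono (ha0 : ∀ k, 0 ≤ a k) (ha1 : HasSum a 1) {s₁ s₂ : ℝ}
    (h0 : 0 ≤ s₁) (h12 : s₁ ≤ s₂) (h21 : s₂ ≤ 1) : pgf a s₁ ≤ pgf a s₂ := by
  refine Summable.tsum_le_tsum (fun k => ?_) (summable_pgf ha0 ha1 h0 (h12.trans h21))
    (summable_pgf ha0 ha1 (h0.trans h12) h21)
  exact mul_le_mul_of_nonneg_left (pow_le_pow_left₀ h0 h12 k) (ha0 k)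

lemma pgf_le_self (ha0 : ∀ k, 0 ≤ a k) (ha1 : HasSum a 1) (h00 : a 0 = 0) {s : ℝ}
    (hs0 : 0 ≤ s) (hs1 : s ≤ 1) : pgf a s ≤ s := by
  have h1 : pgf a s ≤ ∑' k : ℕ, a k * s := by
    refine Summable.tsum_le_tsum (fun k => ?_) (summable_pgf ha0 ha1 hs0 hs1)
      (ha1.summable.mul_right s)
    rcases Nat.eq_zero_or_pos k with hk | hk
    · subst hk; simp [h00]
    · have : s ^ k ≤ s ^ 1 := pow_le_pow_of_le_one hs0 hs1 hk
      rw [pow_one] at this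
      exact mul_le_mul_of_nonneg_left this (ha0 k)
  calc pgf a s ≤ ∑' k : ℕ, a k * s := h1
    _ = (∑' k : ℕ, a k) * s := tsum_mul_right
    _ = s := by rw [ha1.tsum_eq, one_mul]

lemma pgf_continuousOn (ha0 : ∀ k, 0 ≤ a k) (ha1 : HasSum a 1) {r : ℝ}
    (hr0 : 0 ≤ r) (hr1 : r < 1) : ContinuousOn (pgf a) (Icc 0 r) := by
  have : ContinuousOn (fun x : ℝ => ∑' k : ℕ, a k * x ^ k) (Icc 0 r) := by
    refine continuousOn_tsum (u := fun k => r ^ k)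
      (fun k => (continuous_const.mul (continuous_pow k)).continuousOn)
      (summable_geometric_of_lt_one hr0 hr1) (fun k x hx => ?_)
    have hx0 : 0 ≤ x := hx.1
    have hxr : x ≤ r := hx.2
    rw [norm_mul, norm_pow, Real.norm_of_nonneg (ha0 k), Real.norm_of_nonneg hx0]
    calc a k * x ^ k ≤ 1 * x ^ k :=
          mul_le_mul_of_nonneg_right (prob_le_one ha0 ha1 k) (pow_nonneg hx0 k)
      _ = x ^ k := one_mul _
      _ ≤ r ^ k := pow_le_pow_left₀ hx0 hxr k
  exact this

lemma one_mem_fixedSet (ha1 : HasSum a 1) :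
    (1 : ℝ) ∈ {s : ℝ | s ∈ Set.Icc (0 : ℝ) 1 ∧ pgf a s = s} :=
  ⟨⟨zero_le_one, le_refl 1⟩, pgf_one ha1⟩

lemma eta_nonneg (ha1 : HasSum a 1) : 0 ≤ eta a :=
  le_csInf ⟨1, one_mem_fixedSet ha1⟩ (fun s hs => hs.1.1)

lemma bddBelow_fixedSet : BddBelow {s : ℝ | s ∈ Set.Icc (0 : ℝ) 1 ∧ pgf a s = s} :=
  ⟨0, fun s hs => hs.1.1⟩

lemma eta_le_one (ha1 : HasSum a 1) : eta a ≤ 1 :=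
  csInf_le bddBelow_fixedSet (one_mem_fixedSet ha1)

/-- If `eta a < 1` then `eta a` is itself a fixed point of the pgf. -/
lemma eta_fixed (ha0 : ∀ k, 0 ≤ a k) (ha1 : HasSum a 1) (h : eta a < 1) :
    pgf a (eta a) = eta a := by
  set S := {s : ℝ | s ∈ Set.Icc (0 : ℝ) 1 ∧ pgf a s = s} with hS
  set r : ℝ := (eta a + 1) / 2 with hr
  have hη0 : 0 ≤ eta a := eta_nonneg ha1
  have hηr : eta a < r := by rw [hr]; linarith
  have hr1 : r < 1 := by rw [hr]; linarith
  have hr0 : 0 ≤ r := by rw [hr]; linarith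
  -- the truncated fixed point set
  set S' := {s : ℝ | s ∈ Icc (0:ℝ) r ∧ pgf a s = s} with hS'
  have hS'sub : S' ⊆ S := by
    intro s hs
    exact ⟨⟨hs.1.1, hs.1.2.trans hr1.le⟩, hs.2⟩
  obtain ⟨s₀, hs₀S, hs₀r⟩ := exists_lt_of_csInf_lt (s := S) ⟨1, one_mem_fixedSet ha1⟩ hηr
  have hs₀S' : s₀ ∈ S' := ⟨⟨hs₀S.1.1, hs₀r.le⟩, hs₀S.2⟩
  have hclosed : IsClosed S' := by
    have hc : ContinuousOn (fun s => pgf a s - s) (Icc 0 r) :=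
      (pgf_continuousOn ha0 ha1 hr0 hr1).sub continuousOn_id
    have : S' = Icc (0:ℝ) r ∩ (fun s => pgf a s - s) ⁻¹' {0} := by
      ext s
      simp only [hS', mem_setOf_eq, mem_inter_iff, mem_preimage, mem_singleton_iff,
        sub_eq_zero]
    rw [this]
    exact hc.preimage_isClosed_of_isClosed isClosed_Icc isClosed_singleton
  have hbdd : BddBelow S' := ⟨0, fun s hs => hs.1.1⟩
  have hmem : sInf S' ∈ S' := hclosed.csInf_mem ⟨s₀, hs₀S'⟩ hbdd
  have h1 : eta a ≤ sInf S' := csInf_le bddBelow_fixedSet (hS'sub hmem)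
  have h2 : sInf S' ≤ eta a := by
    by_contra hcon
    push_neg at hcon
    obtain ⟨s, hsS, hslt⟩ := exists_lt_of_csInf_lt (s := S) ⟨1, one_mem_fixedSet ha1⟩ hcon
    have : s ∈ S' := by
      refine ⟨⟨hsS.1.1, ?_⟩, hsS.2⟩
      have : sInf S' ≤ s₀ := csInf_le hbdd hs₀S'
      linarith
    exact absurd (csInf_le hbdd this) (not_le.mpr hslt)
  have : sInf S' = eta a := le_antisymm h2 h1
  rw [← this]; exact hmem.2

/-- If `pgf a u ≤ u` for some `u ∈ [0,1)`, then `eta a ≤ u`. -/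
lemma eta_le_of_pgf_le (ha0 : ∀ k, 0 ≤ a k) (ha1 : HasSum a 1) {u : ℝ}
    (hu0 : 0 ≤ u) (hu1 : u < 1) (hle : pgf a u ≤ u) : eta a ≤ u := by
  have hc : ContinuousOn (fun s => pgf a s - s) (Icc 0 u) :=
    (pgf_continuousOn ha0 ha1 hu0 hu1).sub continuousOn_id
  have h0 : (0:ℝ) ∈ Icc ((fun s => pgf a s - s) u) ((fun s => pgf a s - s) 0) := by
    constructor
    · simpa using hle
    · simp only [pgf_zero, sub_zero]
      exact ha0 0
  obtain ⟨x, hx, hgx⟩ := intermediate_value_Icc' hu0 hc h0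
  have hfix : pgf a x = x := by
    have : pgf a x - x = 0 := hgx
    linarith
  exact (csInf_le bddBelow_fixedSet ⟨⟨hx.1, hx.2.trans hu1.le⟩, hfix⟩).trans hx.2

end Aux

section Downshift

variable {a : ℕ → ℝ}

lemma downshift_nonneg_s15 (ha0 : ∀ k, 0 ≤ a k) (hm : 0 < meanNat a) (k : ℕ) :
    0 ≤ downshift a k := by
  unfold downshift
  exact div_nonneg (mul_nonneg (by positivity) (ha0 _)) hm.le

lemma hasSum_shift (ham : Summable (fun k : ℕ => (k : ℝ) * a k)) :
    HasSum (fun k : ℕ => ((k : ℝ) + 1) * a (k + 1)) (meanNat a) := by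
  have h : HasSum (fun k : ℕ => (k : ℝ) * a k) (meanNat a) := ham.hasSum
  have h2 : HasSum (fun k : ℕ => ((k + 1 : ℕ) : ℝ) * a (k + 1)) (meanNat a) := by
    rw [hasSum_nat_add_iff (f := fun k : ℕ => (k : ℝ) * a k) 1]
    simpa using h
  refine h2.congr_fun ?_
  intro k
  push_cast
  ring

lemma downshift_hasSum_one (ham : Summable (fun k : ℕ => (k : ℝ) * a k))
    (hm : meanNat a ≠ 0) : HasSum (downshift a) 1 := by
  have := (hasSum_shift ham).div_const (meanNat a)
  rw [div_self hm] at this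
  exact this

/-- `m_a * pgf (downshift a) s = ∑ k s^(k-1) a k`. -/
lemma pgf_downshift_eq (ha0 : ∀ k, 0 ≤ a k)
    (ham : Summable (fun k : ℕ => (k : ℝ) * a k)) (hm : meanNat a ≠ 0)
    {s : ℝ} (hs0 : 0 ≤ s) (hs1 : s ≤ 1) :
    meanNat a * pgf (downshift a) s = ∑' k : ℕ, (k : ℝ) * s ^ (k - 1) * a k := by
  have hsummable : Summable (fun k : ℕ => (k : ℝ) * s ^ (k - 1) * a k) := by
    refine Summable.of_nonneg_of_le
      (fun k => mul_nonneg (mul_nonneg (Nat.cast_nonneg k) (pow_nonneg hs0 _)) (ha0 k))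
      (fun k => ?_) ham
    calc (k : ℝ) * s ^ (k - 1) * a k ≤ (k : ℝ) * 1 * a k := by
          refine mul_le_mul_of_nonneg_right ?_ (ha0 k)
          exact mul_le_mul_of_nonneg_left (pow_le_one₀ hs0 hs1) (Nat.cast_nonneg k)
      _ = (k : ℝ) * a k := by ring
  rw [Summable.tsum_eq_zero_add hsummable]
  simp only [Nat.cast_zero, zero_mul, zero_add, Nat.add_sub_cancel]
  unfold pgf downshift
  rw [← tsum_mul_left]
  congr 1
  ext k
  have : ((k + 1 : ℕ) : ℝ) = (k : ℝ) + 1 := by push_cast; ring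
  rw [this]
  field_simp

end Downshift


section ICV

open Set

lemma mean_le_of_icv (p q : ℕ → ℝ)
    (hpm : Summable (fun k : ℕ => (k : ℝ) * p k))
    (hqm : Summable (fun k : ℕ => (k : ℝ) * q k))
    (hicv : icvLE p q) : meanNat p ≤ meanNat q := by
  have h := hicv id monotone_id (concaveOn_id convex_univ) hpm hqm
  simpa [meanNat] using h

lemma pgf_ge_of_icv (p q : ℕ → ℝ) (hp0 : ∀ k, 0 ≤ p k) (hp1 : HasSum p 1)
    (hq0 : ∀ k, 0 ≤ q k) (hq1 : HasSum q 1) (hicv : icvLE p q) (h0 : p 0 = q 0)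
    {s : ℝ} (hs0 : 0 ≤ s) (hs1 : s < 1) : pgf q s ≤ pgf p s := by
  rcases eq_or_lt_of_le hs0 with h | hpos
  · rw [← h, pgf_zero, pgf_zero, h0]
  set c := Real.log s with hc
  have hclt : c < 0 := Real.log_neg hpos hs1
  set φ : ℝ → ℝ := fun x => -Real.exp (c * x) with hφ
  have hmono : Monotone φ := by
    intro x y hxy
    simp only [hφ, neg_le_neg_iff]
    exact Real.exp_le_exp.2 (mul_le_mul_of_nonpos_left hxy hclt.le)
  have hconc : ConcaveOn ℝ Set.univ φ := by
    refine ⟨convex_univ, fun x _ y _ a b ha hb hab => ?_⟩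
    have h2 := convexOn_exp.2 (Set.mem_univ (c * x)) (Set.mem_univ (c * y)) ha hb hab
    simp only [smul_eq_mul] at h2 ⊢
    have h3 : Real.exp (c * (a * x + b * y)) ≤ a * Real.exp (c * x) + b * Real.exp (c * y) := by
      rw [show c * (a * x + b * y) = a * (c * x) + b * (c * y) by ring]
      exact h2
    simp only [hφ]
    linarith
  have key : ∀ k : ℕ, φ (k : ℝ) = -(s ^ k) := by
    intro k
    simp only [hφ]
    rw [mul_comm, Real.exp_nat_mul, Real.exp_log hpos]
  have heqp : (fun k : ℕ => φ (k : ℝ) * p k) = fun k : ℕ => -(p k * s ^ k) := by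
    funext k; rw [key]; ring
  have heqq : (fun k : ℕ => φ (k : ℝ) * q k) = fun k : ℕ => -(q k * s ^ k) := by
    funext k; rw [key]; ring
  have hsp : Summable (fun k : ℕ => φ (k : ℝ) * p k) := by
    rw [heqp]; exact (summable_pgf hp0 hp1 hs0 hs1.le).neg
  have hsq : Summable (fun k : ℕ => φ (k : ℝ) * q k) := by
    rw [heqq]; exact (summable_pgf hq0 hq1 hs0 hs1.le).neg
  have h := hicv φ hmono hconc hsp hsq
  rw [heqp, heqq, tsum_neg, tsum_neg] at h
  have : pgf q s ≤ pgf p s := by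
    unfold pgf
    linarith
  exact this

end ICV

open Set

section Phi

open Set intervalIntegral

variable {c L : ℝ}

/-- `F = f'` where `f y = y * exp (c (y-1))`. -/
noncomputable def auxF (c : ℝ) : ℝ → ℝ := fun y => Real.exp (c * (y - 1)) * (1 + c * y)

lemma auxF_hasDerivAt (c y : ℝ) :
    HasDerivAt (auxF c) (Real.exp (c * (y - 1)) * (c * (2 + c * y))) y := by
  have h1 : HasDerivAt (fun y : ℝ => c * (y - 1)) c y := by
    simpa using (((hasDerivAt_id y).sub_const 1).const_mul c)
  have h2 : HasDerivAt (fun y : ℝ => Real.exp (c * (y - 1))) (Real.exp (c * (y - 1)) * c) y :=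
    h1.exp
  have h3 : HasDerivAt (fun y : ℝ => 1 + c * y) c y := by
    simpa using ((hasDerivAt_id y).const_mul c).const_add 1
  have := h2.fun_mul h3
  refine this.congr_deriv ?_
  ring

lemma auxF_continuous (c : ℝ) : Continuous (auxF c) := by
  unfold auxF; fun_prop

lemma hasDerivAt_f (c y : ℝ) :
    HasDerivAt (fun y : ℝ => y * Real.exp (c * (y - 1))) (auxF c y) y := by
  have h1 : HasDerivAt (fun y : ℝ => c * (y - 1)) c y := by
    simpa using (((hasDerivAt_id y).sub_const 1).const_mul c)
  have h2 : HasDerivAt (fun y : ℝ => Real.exp (c * (y - 1))) (Real.exp (c * (y - 1)) * c) y :=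
    h1.exp
  have := (hasDerivAt_id y).fun_mul h2
  refine this.congr_deriv ?_
  unfold auxF
  simp only [id]
  ring

lemma auxF_monotoneOn (hc : c < 0) (hcL : c * L ≤ -2) : MonotoneOn (auxF c) (Ici L) := by
  refine monotoneOn_of_deriv_nonneg (convex_Ici L) (auxF_continuous c).continuousOn
    (fun y _ => (auxF_hasDerivAt c y).differentiableAt.differentiableWithinAt)
    (fun y hy => ?_)
  rw [interior_Ici] at hy
  rw [(auxF_hasDerivAt c y).deriv]
  have hy' : L ≤ y := le_of_lt hy
  have h1 : c * y ≤ c * L := mul_le_mul_of_nonpos_left hy' hc.le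
  have h2 : 2 + c * y ≤ 0 := by linarith
  have h3 : 0 ≤ c * (2 + c * y) := by nlinarith
  positivity

lemma auxF_nonpos (hc : c < 0) (hcL : c * L ≤ -2) {y : ℝ} (hy : L ≤ y) : auxF c y ≤ 0 := by
  unfold auxF
  have h1 : c * y ≤ c * L := mul_le_mul_of_nonpos_left hy hc.le
  have h2 : 1 + c * y ≤ 0 := by linarith
  exact mul_nonpos_of_nonneg_of_nonpos (Real.exp_pos _).le h2

/-- The concave increasing function used in the icv comparison of downshifts:
it equals `-(x * exp (c (x-1)))` for `x ≥ L`, extended by its tangent line below `L`. -/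
noncomputable def auxPhi (c L : ℝ) : ℝ → ℝ :=
  fun x => -(L * Real.exp (c * (L - 1))) + ∫ u in L..x, -(auxF c (max u L))

lemma auxW_continuous (c L : ℝ) : Continuous (fun u : ℝ => -(auxF c (max u L))) :=
  ((auxF_continuous c).comp (continuous_id.max continuous_const)).neg

lemma auxPhi_hasDerivAt (c L x : ℝ) :
    HasDerivAt (auxPhi c L) (-(auxF c (max x L))) x := by
  have := ((auxW_continuous c L).integral_hasStrictDerivAt L x).hasDerivAt
  exact this.const_add _

lemma auxPhi_monotone (hc : c < 0) (hcL : c * L ≤ -2) : Monotone (auxPhi c L) := by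
  refine monotone_of_deriv_nonneg (fun x => (auxPhi_hasDerivAt c L x).differentiableAt)
    (fun x => ?_)
  rw [(auxPhi_hasDerivAt c L x).deriv]
  simpa using auxF_nonpos hc hcL (le_max_right x L)

lemma auxPhi_concave (hc : c < 0) (hcL : c * L ≤ -2) : ConcaveOn ℝ Set.univ (auxPhi c L) := by
  refine Antitone.concaveOn_univ_of_deriv
    (fun x => (auxPhi_hasDerivAt c L x).differentiableAt) ?_
  intro x y hxy
  rw [(auxPhi_hasDerivAt c L x).deriv, (auxPhi_hasDerivAt c L y).deriv, neg_le_neg_iff]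
  exact auxF_monotoneOn hc hcL (le_max_right x L) (le_max_right y L)
    (max_le_max hxy (le_refl L))

lemma auxPhi_eq (c L : ℝ) {x : ℝ} (hx : L ≤ x) :
    auxPhi c L x = -(x * Real.exp (c * (x - 1))) := by
  unfold auxPhi
  have hcongr : ∫ u in L..x, -(auxF c (max u L)) = ∫ u in L..x, -(auxF c u) := by
    refine integral_congr (fun u hu => ?_)
    rw [uIcc_of_le hx] at hu
    rw [max_eq_left hu.1]
  rw [hcongr]
  have hint : ∫ u in L..x, -(auxF c u) =
      -(x * Real.exp (c * (x - 1))) - -(L * Real.exp (c * (L - 1))) := by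
    refine integral_eq_sub_of_hasDerivAt (fun u _ => (hasDerivAt_f c u).neg) ?_
    exact ((auxF_continuous c).neg).intervalIntegrable L x
  rw [hint]
  ring

end Phi

section Claim2

open Set

lemma summable_kpow {a : ℕ → ℝ} (ha0 : ∀ k, 0 ≤ a k)
    (ham : Summable (fun k : ℕ => (k : ℝ) * a k)) {s : ℝ} (hs0 : 0 ≤ s) (hs1 : s ≤ 1) :
    Summable (fun k : ℕ => (k : ℝ) * s ^ (k - 1) * a k) := by
  refine Summable.of_nonneg_of_le
    (fun k => mul_nonneg (mul_nonneg (Nat.cast_nonneg k) (pow_nonneg hs0 _)) (ha0 k))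
    (fun k => ?_) ham
  calc (k : ℝ) * s ^ (k - 1) * a k ≤ (k : ℝ) * 1 * a k := by
        refine mul_le_mul_of_nonneg_right ?_ (ha0 k)
        exact mul_le_mul_of_nonneg_left (pow_le_one₀ hs0 hs1) (Nat.cast_nonneg k)
    _ = (k : ℝ) * a k := by ring

lemma downshift_pgf_ge (p q : ℕ → ℝ) (l : ℕ)
    (hp0 : ∀ k, 0 ≤ p k) (hp1 : HasSum p 1) (hq0 : ∀ k, 0 ≤ q k) (hq1 : HasSum q 1)
    (hpm : Summable (fun k : ℕ => (k : ℝ) * p k)) (hpm0 : meanNat p ≠ 0)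
    (hqm : Summable (fun k : ℕ => (k : ℝ) * q k)) (hqm0 : meanNat q ≠ 0)
    (hicv : icvLE p q) (heq : ∀ i ≤ l, p i = q i)
    {s : ℝ} (hs0 : 0 < s) (hst : s ≤ Real.exp (-2 / ((l : ℝ) + 1))) :
    pgf (downshift q) s ≤ pgf (downshift p) s := by
  set L : ℝ := (l : ℝ) + 1 with hLdef
  have hL : 0 < L := by positivity
  set c : ℝ := Real.log s with hcdef
  have hc : c ≤ -2 / L := by
    have h := Real.log_le_log hs0 hst
    rwa [Real.log_exp] at h
  have hcL : c * L ≤ -2 := (le_div_iff₀ hL).mp hc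
  have hc0 : c < 0 := by nlinarith
  have hs1 : s < 1 := by
    refine lt_of_le_of_lt hst (Real.exp_lt_one_iff.2 ?_)
    exact div_neg_of_neg_of_pos (by norm_num) hL
  set φ : ℝ → ℝ := auxPhi c L with hφdef
  have hφnat : ∀ k : ℕ, l + 1 ≤ k → φ (k : ℝ) = -((k : ℝ) * s ^ (k - 1)) := by
    intro k hk
    have hk1 : 1 ≤ k := le_trans (Nat.le_add_left 1 l) hk
    have hLk : L ≤ (k : ℝ) := by
      rw [hLdef]
      have : ((l + 1 : ℕ) : ℝ) ≤ (k : ℝ) := Nat.cast_le.2 hk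
      push_cast at this
      linarith
    rw [hφdef, auxPhi_eq c L hLk]
    have hcast : ((k : ℝ) - 1) = ((k - 1 : ℕ) : ℝ) := by
      rw [Nat.cast_sub hk1]; simp
    rw [hcast, mul_comm c, Real.exp_nat_mul, Real.exp_log hs0]
  have hψp : Summable (fun k : ℕ => (k : ℝ) * s ^ (k - 1) * p k) :=
    summable_kpow hp0 hpm hs0.le hs1.le
  have hψq : Summable (fun k : ℕ => (k : ℝ) * s ^ (k - 1) * q k) :=
    summable_kpow hq0 hqm hs0.le hs1.le
  have hdp : Summable (fun k : ℕ => φ (k : ℝ) * p k + (k : ℝ) * s ^ (k - 1) * p k) := by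
    apply summable_of_ne_finset_zero (s := Finset.range (l + 1))
    intro k hk
    have hk' : l + 1 ≤ k := by simpa [Finset.mem_range, not_lt] using hk
    rw [hφnat k hk']; ring
  have hdq : Summable (fun k : ℕ => φ (k : ℝ) * q k + (k : ℝ) * s ^ (k - 1) * q k) := by
    apply summable_of_ne_finset_zero (s := Finset.range (l + 1))
    intro k hk
    have hk' : l + 1 ≤ k := by simpa [Finset.mem_range, not_lt] using hk
    rw [hφnat k hk']; ring
  have hφsump : Summable (fun k : ℕ => φ (k : ℝ) * p k) :=
    (hdp.add hψp.neg).congr (fun k => by ring)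
  have hφsumq : Summable (fun k : ℕ => φ (k : ℝ) * q k) :=
    (hdq.add hψq.neg).congr (fun k => by ring)
  have main := hicv φ (auxPhi_monotone hc0 hcL) (auxPhi_concave hc0 hcL) hφsump hφsumq
  have hrwp : ∑' k : ℕ, φ (k : ℝ) * p k =
      (∑' k : ℕ, (φ (k : ℝ) * p k + (k : ℝ) * s ^ (k - 1) * p k))
        - ∑' k : ℕ, (k : ℝ) * s ^ (k - 1) * p k := by
    rw [← Summable.tsum_sub hdp hψp]
    exact tsum_congr fun k => by ring
  have hrwq : ∑' k : ℕ, φ (k : ℝ) * q k =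
      (∑' k : ℕ, (φ (k : ℝ) * q k + (k : ℝ) * s ^ (k - 1) * q k))
        - ∑' k : ℕ, (k : ℝ) * s ^ (k - 1) * q k := by
    rw [← Summable.tsum_sub hdq hψq]
    exact tsum_congr fun k => by ring
  have hC : ∑' k : ℕ, (φ (k : ℝ) * p k + (k : ℝ) * s ^ (k - 1) * p k)
      = ∑' k : ℕ, (φ (k : ℝ) * q k + (k : ℝ) * s ^ (k - 1) * q k) := by
    refine tsum_congr fun k => ?_
    by_cases hk : k ≤ l
    · rw [heq k hk]
    · rw [hφnat k (by omega)]; ring_nf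
  rw [hrwp, hrwq, hC] at main
  have hkey : ∑' k : ℕ, (k : ℝ) * s ^ (k - 1) * q k
      ≤ ∑' k : ℕ, (k : ℝ) * s ^ (k - 1) * p k := by linarith
  rw [← pgf_downshift_eq hp0 hpm hpm0 hs0.le hs1.le,
    ← pgf_downshift_eq hq0 hqm hqm0 hs0.le hs1.le] at hkey
  -- now m_q * G_q∘(s) ≤ m_p * G_p∘(s)
  have hmp : 0 < meanNat p := by
    refine lt_of_le_of_ne ?_ (Ne.symm hpm0)
    exact tsum_nonneg fun k => mul_nonneg (Nat.cast_nonneg k) (hp0 k)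
  have hmq : 0 < meanNat q := by
    refine lt_of_le_of_ne ?_ (Ne.symm hqm0)
    exact tsum_nonneg fun k => mul_nonneg (Nat.cast_nonneg k) (hq0 k)
  have hmean : meanNat p ≤ meanNat q := mean_le_of_icv p q hpm hqm hicv
  have hGp0 : 0 ≤ pgf (downshift p) s := pgf_nonneg (downshift_nonneg_s15 hp0 hmp) hs0.le
  have hGq0 : 0 ≤ pgf (downshift q) s := pgf_nonneg (downshift_nonneg_s15 hq0 hmq) hs0.le
  nlinarith [hkey, hmp, hmq, hmean, hGp0, hGq0]

end Claim2

/-- If `p ≤_icv q`, `p(i) = q(i)` for `i = 0,…,ℓ`, and `η(q∘) ≤ e^{-2/(ℓ+1)}`,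
then `ζ_CM(p) ≤ ζ_CM(q)`. -/
theorem zetaCM_mono (p q : ℕ → ℝ) (l : ℕ)
    (hp : (∀ k, 0 ≤ p k) ∧ HasSum p 1) (hq : (∀ k, 0 ≤ q k) ∧ HasSum q 1)
    (hpm : Summable (fun k : ℕ => (k : ℝ) * p k)) (hpm0 : meanNat p ≠ 0)
    (hqm : Summable (fun k : ℕ => (k : ℝ) * q k)) (hqm0 : meanNat q ≠ 0)
    (hicv : icvLE p q) (heq : ∀ i ≤ l, p i = q i)
    (heta : eta (downshift q) ≤ Real.exp (-2 / ((l : ℝ) + 1))) :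
    zetaCM p ≤ zetaCM q := by
  obtain ⟨hp0, hp1⟩ := hp
  obtain ⟨hq0, hq1⟩ := hq
  set t : ℝ := Real.exp (-2 / ((l : ℝ) + 1)) with htdef
  have hL : (0:ℝ) < (l : ℝ) + 1 := by positivity
  have ht1 : t < 1 := Real.exp_lt_one_iff.2 (div_neg_of_neg_of_pos (by norm_num) hL)
  have hbp0 : ∀ k, 0 ≤ downshift p k := by
    intro k
    refine downshift_nonneg_s15 hp0 ?_ k
    refine lt_of_le_of_ne ?_ (Ne.symm hpm0)
    exact tsum_nonneg fun k => mul_nonneg (Nat.cast_nonneg k) (hp0 k)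
  have hbq0 : ∀ k, 0 ≤ downshift q k := by
    intro k
    refine downshift_nonneg_s15 hq0 ?_ k
    refine lt_of_le_of_ne ?_ (Ne.symm hqm0)
    exact tsum_nonneg fun k => mul_nonneg (Nat.cast_nonneg k) (hq0 k)
  have hbp1 : HasSum (downshift p) 1 := downshift_hasSum_one hpm hpm0
  have hbq1 : HasSum (downshift q) 1 := downshift_hasSum_one hqm hqm0
  have hηq0 : 0 ≤ eta (downshift q) := eta_nonneg hbq1
  have hηq1 : eta (downshift q) < 1 := lt_of_le_of_lt heta ht1
  have hηp0 : 0 ≤ eta (downshift p) := eta_nonneg hbp1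
  have hηp1 : eta (downshift p) ≤ 1 := eta_le_one hbp1
  -- the key step: η(q∘) ≤ η(p∘)
  have hle : eta (downshift q) ≤ eta (downshift p) := by
    rcases lt_or_ge (eta (downshift p)) 1 with h1 | h1
    · by_contra hcon
      push_neg at hcon
      have hfix : pgf (downshift p) (eta (downshift p)) = eta (downshift p) :=
        eta_fixed hbp0 hbp1 h1
      rcases eq_or_lt_of_le hηp0 with h0 | h0
      · -- eta (downshift p) = 0
        have hb0 : downshift p 0 = 0 := by
          rw [← h0] at hfix
          rw [← pgf_zero (a := downshift p), hfix]
        set s₀ : ℝ := eta (downshift q) / 2 with hs₀def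
        have hs₀pos : 0 < s₀ := by
          have : 0 < eta (downshift q) := lt_of_le_of_lt h0.le hcon
          rw [hs₀def]; linarith
        have hs₀lt : s₀ < eta (downshift q) := by
          have : 0 < eta (downshift q) := lt_of_le_of_lt h0.le hcon
          rw [hs₀def]; linarith
        have hs₀t : s₀ ≤ t := le_trans hs₀lt.le heta
        have h2 : pgf (downshift q) s₀ ≤ pgf (downshift p) s₀ :=
          downshift_pgf_ge p q l hp0 hp1 hq0 hq1 hpm hpm0 hqm hqm0 hicv heq hs₀pos hs₀t
        have h3 : pgf (downshift p) s₀ ≤ s₀ :=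
          pgf_le_self hbp0 hbp1 hb0 hs₀pos.le (le_trans hs₀lt.le hηq1.le)
        have h4 := eta_le_of_pgf_le hbq0 hbq1 hs₀pos.le (lt_of_lt_of_le hs₀lt hηq1.le)
          (h2.trans h3)
        linarith
      · -- 0 < eta (downshift p)
        have hpt : eta (downshift p) ≤ t := le_trans hcon.le heta
        have h2 : pgf (downshift q) (eta (downshift p)) ≤
            pgf (downshift p) (eta (downshift p)) :=
          downshift_pgf_ge p q l hp0 hp1 hq0 hq1 hpm hpm0 hqm hqm0 hicv heq h0 hpt
        rw [hfix] at h2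
        have h4 := eta_le_of_pgf_le hbq0 hbq1 hηp0 h1 h2
        linarith
    · linarith
  -- conclude
  have step1 : pgf q (eta (downshift q)) ≤ pgf p (eta (downshift q)) :=
    pgf_ge_of_icv p q hp0 hp1 hq0 hq1 hicv (heq 0 (Nat.zero_le l)) hηq0 hηq1
  have step2 : pgf p (eta (downshift q)) ≤ pgf p (eta (downshift p)) :=
    pgf_mono hp0 hp1 hηq0 hle hηp1
  unfold zetaCM
  linarith
end
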